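/- arXiv:1506.06574 — 2 statements merged into one kernel-verified Lean document; each statement's English description precedes it below -/
import Mathlib

section
/- (Universal property of A^{ue}.) Let A be a DG Poisson algebra over a field k with Poisson bracket of degree p. For any triple (B, f, g) having property P with respect to A, there exists a unique DG-algebra homomorphism φ : A^{ue} → B of degree 0 such that f = φ ∘ M and g = φ ∘ H, where M, H : A → A^{ue} are the canonical maps a ↦ M_a, a ↦ H_a. -/
/-!
Relations (i)–(v) are exactly (P1)–(P4) read in `B`, so `M_a ↦ f a`, `H_a ↦ g a` defines an
algebra map `φ` out of the tensor algebra that descends to `A^{ue}`; it is unique because the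
`M_a`, `H_a` generate. For the degree and the differential, let `S i` consist of the `x` of degree
`i` with `φ x` of degree `i` and `φ (D x) = d_B (φ x)`. By the graded Leibniz rule in both algebras
the `S i` form a graded monoid, so `⨆ i, S i` is a subalgebra; it contains every `M_a` and `H_a`
(split `a` into homogeneous components), hence is everything, and projecting to the `i`-th
component of the grading of `A^{ue}` shows `S i` is all of degree `i`.
-/

noncomputable section

/-- A (graded-commutative) DG Poisson algebra structure, with Poisson bracket of degree `p`,
on a `ℤ`-graded `k`-algebra `A` with grading `𝒜`, differential `dA` and bracket `br`.
All axioms are stated for homogeneous elements, and signs are the Koszul signs. -/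
structure IsDGPoissonAlgebra (k : Type) [Field k] (A : Type) [Ring A] [Algebra k A]
    (𝒜 : ℤ → Submodule k A) (dA : A →ₗ[k] A)
    (br : A →ₗ[k] A →ₗ[k] A) (p : ℤ) : Prop where
  comm : ∀ (i j : ℤ) (a b : A), a ∈ 𝒜 i → b ∈ 𝒜 j →
    a * b = ((-1 : k) ^ (i * j)) • (b * a)
  d_mem : ∀ (i : ℤ) (a : A), a ∈ 𝒜 i → dA a ∈ 𝒜 (i + 1)
  d_sq : ∀ a : A, dA (dA a) = 0
  d_mul : ∀ (i j : ℤ) (a b : A), a ∈ 𝒜 i → b ∈ 𝒜 j →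
    dA (a * b) = dA a * b + ((-1 : k) ^ i) • (a * dA b)
  br_mem : ∀ (i j : ℤ) (a b : A), a ∈ 𝒜 i → b ∈ 𝒜 j → br a b ∈ 𝒜 (i + j + p)
  antisymm : ∀ (i j : ℤ) (a b : A), a ∈ 𝒜 i → b ∈ 𝒜 j →
    br a b = -(((-1 : k) ^ ((i + p) * (j + p))) • br b a)
  jacobi : ∀ (i j l : ℤ) (a b c : A), a ∈ 𝒜 i → b ∈ 𝒜 j → c ∈ 𝒜 l →
    br a (br b c) = br (br a b) c + ((-1 : k) ^ ((i + p) * (j + p))) • br b (br a c)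
  d_br : ∀ (i j : ℤ) (a b : A), a ∈ 𝒜 i → b ∈ 𝒜 j →
    dA (br a b) = br (dA a) b + ((-1 : k) ^ (i + p)) • br a (dA b)
  poisson : ∀ (i j l : ℤ) (a b c : A), a ∈ 𝒜 i → b ∈ 𝒜 j → c ∈ 𝒜 l →
    br a (b * c) = br a b * c + ((-1 : k) ^ ((i + p) * j)) • (b * br a c)

/-- A (not necessarily commutative) DG algebra structure on a `ℤ`-graded `k`-algebra. -/
structure IsDGAlgebra (k : Type) [Field k] (B : Type) [Ring B] [Algebra k B]
    (ℬ : ℤ → Submodule k B) (dB : B →ₗ[k] B) : Prop where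
  graded_monoid : SetLike.GradedMonoid ℬ
  decomp : Nonempty (DirectSum.Decomposition ℬ)
  d_mem : ∀ (i : ℤ) (x : B), x ∈ ℬ i → dB x ∈ ℬ (i + 1)
  d_sq : ∀ x : B, dB (dB x) = 0
  d_mul : ∀ (i j : ℤ) (x y : B), x ∈ ℬ i → y ∈ ℬ j →
    dB (x * y) = dB x * y + ((-1 : k) ^ i) • (x * dB y)
/-- The defining relations of the universal enveloping algebra of a DG Poisson algebra,
inside the free algebra (tensor algebra) on two copies `M_a = ι (a,0)`, `H_a = ι (0,a)`
of the underlying vector space of `A`. -/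
inductive UERel (k : Type) [Field k] (A : Type) [Ring A] [Algebra k A]
    (𝒜 : ℤ → Submodule k A) (br : A →ₗ[k] A →ₗ[k] A) (p : ℤ) :
    TensorAlgebra k (A × A) → TensorAlgebra k (A × A) → Prop
  | mul_M : ∀ (i j : ℤ) (a b : A), a ∈ 𝒜 i → b ∈ 𝒜 j →
      UERel k A 𝒜 br p (TensorAlgebra.ι k (a * b, (0 : A)))
        (TensorAlgebra.ι k (a, (0 : A)) * TensorAlgebra.ι k (b, (0 : A)))
  | br_H : ∀ (i j : ℤ) (a b : A), a ∈ 𝒜 i → b ∈ 𝒜 j →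
      UERel k A 𝒜 br p (TensorAlgebra.ι k ((0 : A), br a b))
        (TensorAlgebra.ι k ((0 : A), a) * TensorAlgebra.ι k ((0 : A), b) -
          ((-1 : k) ^ ((i + p) * (j + p))) •
            (TensorAlgebra.ι k ((0 : A), b) * TensorAlgebra.ι k ((0 : A), a)))
  | mul_H : ∀ (i j : ℤ) (a b : A), a ∈ 𝒜 i → b ∈ 𝒜 j →
      UERel k A 𝒜 br p (TensorAlgebra.ι k ((0 : A), a * b))
        (TensorAlgebra.ι k (a, (0 : A)) * TensorAlgebra.ι k ((0 : A), b) +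
          ((-1 : k) ^ (i * j)) •
            (TensorAlgebra.ι k (b, (0 : A)) * TensorAlgebra.ι k ((0 : A), a)))
  | br_M : ∀ (i j : ℤ) (a b : A), a ∈ 𝒜 i → b ∈ 𝒜 j →
      UERel k A 𝒜 br p (TensorAlgebra.ι k (br a b, (0 : A)))
        (TensorAlgebra.ι k ((0 : A), a) * TensorAlgebra.ι k (b, (0 : A)) -
          ((-1 : k) ^ ((i + p) * j)) •
            (TensorAlgebra.ι k (b, (0 : A)) * TensorAlgebra.ι k ((0 : A), a)))
  | one_M : UERel k A 𝒜 br p (TensorAlgebra.ι k ((1 : A), (0 : A))) 1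

/-- The universal enveloping algebra `A^{ue}` of a DG Poisson algebra `A`. -/
abbrev UEA (k : Type) [Field k] (A : Type) [Ring A] [Algebra k A]
    (𝒜 : ℤ → Submodule k A) (br : A →ₗ[k] A →ₗ[k] A) (p : ℤ) : Type :=
  RingQuot (UERel k A 𝒜 br p)

/-- The canonical linear map `a ↦ M_a` into the universal enveloping algebra. -/
def ueM (k : Type) [Field k] (A : Type) [Ring A] [Algebra k A]
    (𝒜 : ℤ → Submodule k A) (br : A →ₗ[k] A →ₗ[k] A) (p : ℤ) :
    A →ₗ[k] UEA k A 𝒜 br p :=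
  (RingQuot.mkAlgHom k (UERel k A 𝒜 br p)).toLinearMap.comp
    ((TensorAlgebra.ι k).comp (LinearMap.inl k A A))

/-- The canonical linear map `a ↦ H_a` into the universal enveloping algebra. -/
def ueH (k : Type) [Field k] (A : Type) [Ring A] [Algebra k A]
    (𝒜 : ℤ → Submodule k A) (br : A →ₗ[k] A →ₗ[k] A) (p : ℤ) :
    A →ₗ[k] UEA k A 𝒜 br p :=
  (RingQuot.mkAlgHom k (UERel k A 𝒜 br p)).toLinearMap.comp
    ((TensorAlgebra.ι k).comp (LinearMap.inr k A A))

/-- The canonical DG-algebra structure on the universal enveloping algebra `A^{ue}`: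
a grading `ℬ` for which `M_a` has degree `|a|` and `H_a` has degree `|a| + p`, and a
differential `D` with `D M_a = M_{dA a}`, `D H_a = H_{dA a}`, making `A^{ue}` a DG algebra. -/
structure IsUEADG (k : Type) [Field k] (A : Type) [Ring A] [Algebra k A]
    (𝒜 : ℤ → Submodule k A) (dA : A →ₗ[k] A) (br : A →ₗ[k] A →ₗ[k] A) (p : ℤ)
    (ℬ : ℤ → Submodule k (UEA k A 𝒜 br p))
    (D : UEA k A 𝒜 br p →ₗ[k] UEA k A 𝒜 br p) : Prop where
  m_mem : ∀ (i : ℤ) (a : A), a ∈ 𝒜 i → ueM k A 𝒜 br p a ∈ ℬ i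
  h_mem : ∀ (i : ℤ) (a : A), a ∈ 𝒜 i → ueH k A 𝒜 br p a ∈ ℬ (i + p)
  d_m : ∀ a : A, D (ueM k A 𝒜 br p a) = ueM k A 𝒜 br p (dA a)
  d_h : ∀ a : A, D (ueH k A 𝒜 br p a) = ueH k A 𝒜 br p (dA a)
  dga : IsDGAlgebra k (UEA k A 𝒜 br p) ℬ D
/-- Property `𝒫` for a triple `(B, f, g)` with respect to a DG Poisson algebra `A` with
bracket of degree `p`:  `f` is a degree-0 DG-algebra map, `g` is a degree-`p` DG Lie algebra
map into `B` with the graded-commutator bracket, and the mixed conditions (P3), (P4) hold. -/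
structure IsPTriple (k : Type) [Field k] (A : Type) [Ring A] [Algebra k A]
    (B : Type) [Ring B] [Algebra k B]
    (𝒜 : ℤ → Submodule k A) (dA : A →ₗ[k] A) (br : A →ₗ[k] A →ₗ[k] A) (p : ℤ)
    (ℬ : ℤ → Submodule k B) (dB : B →ₗ[k] B)
    (f g : A →ₗ[k] B) : Prop where
  f_one : f 1 = 1
  f_mul : ∀ a b : A, f (a * b) = f a * f b
  f_mem : ∀ (i : ℤ) (a : A), a ∈ 𝒜 i → f a ∈ ℬ i
  f_d : ∀ a : A, f (dA a) = dB (f a)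
  g_mem : ∀ (i : ℤ) (a : A), a ∈ 𝒜 i → g a ∈ ℬ (i + p)
  g_d : ∀ a : A, g (dA a) = dB (g a)
  g_br : ∀ (i j : ℤ) (a b : A), a ∈ 𝒜 i → b ∈ 𝒜 j →
    g (br a b) = g a * g b - ((-1 : k) ^ ((i + p) * (j + p))) • (g b * g a)
  f_br : ∀ (i j : ℤ) (a b : A), a ∈ 𝒜 i → b ∈ 𝒜 j →
    f (br a b) = g a * f b - ((-1 : k) ^ ((i + p) * j)) • (f b * g a)
  g_mul : ∀ (i j : ℤ) (a b : A), a ∈ 𝒜 i → b ∈ 𝒜 j →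
    g (a * b) = f a * g b + ((-1 : k) ^ (i * j)) • (f b * g a)

open DirectSum

theorem DirectSum.Decomposition.map_mem_iSup {ι κ R M N : Type*} [DecidableEq ι] [Semiring R]
    [AddCommMonoid M] [Module R M] [AddCommMonoid N] [Module R N]
    (ℳ : ι → Submodule R M) [Decomposition ℳ] (L : M →ₗ[R] N) {T : κ → Submodule R N}
    (σ : ι → κ) (h : ∀ i, ∀ x ∈ ℳ i, L x ∈ T (σ i)) (x : M) : L x ∈ ⨆ j, T j := by
  have hle : ⨆ i, ℳ i ≤ (⨆ j, T j).comap L :=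
    iSup_le fun i y hy => Submodule.mem_iSup_of_mem (σ i) (h i y hy)
  exact hle ((Decomposition.isInternal ℳ).submodule_iSup_eq_top ▸ Submodule.mem_top)

theorem DirectSum.Decomposition.mem_of_mem_iSup {ι R M : Type*} [DecidableEq ι] [Semiring R]
    [AddCommMonoid M] [Module R M] (ℳ : ι → Submodule R M) [Decomposition ℳ]
    {S : ι → Submodule R M} (hS : ∀ j, S j ≤ ℳ j) {i : ι} {x : M}
    (hx : x ∈ ⨆ j, S j) (hxi : x ∈ ℳ i) : x ∈ S i := by
  rw [← decompose_of_mem_same ℳ hxi]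
  refine Submodule.iSup_induction S (motive := fun y => (decompose ℳ y i : M) ∈ S i) hx
    (fun j y hy => ?_) (by simp) (fun y z hy hz => ?_)
  · by_cases hji : j = i
    · subst hji
      rwa [decompose_of_mem_same ℳ (hS j hy)]
    · rw [decompose_of_mem_ne ℳ (hS j hy) hji]
      exact zero_mem _
  · rw [decompose_add, add_apply, Submodule.coe_add]
    exact add_mem hy hz

section DGAlgebra

variable {k : Type} [Field k] {R : Type} [Ring R] [Algebra k R]
  {ℛ : ℤ → Submodule k R} {dR : R →ₗ[k] R}
  {B : Type} [Ring B] [Algebra k B] {ℬ : ℤ → Submodule k B} {dB : B →ₗ[k] B}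

theorem IsDGAlgebra.d_one (hR : IsDGAlgebra k R ℛ dR) : dR 1 = 0 := by
  have h1 : (1 : R) ∈ ℛ 0 := hR.graded_monoid.one_mem
  simpa using hR.d_mul 0 0 1 1 h1 h1

variable (ℛ dR ℬ dB) in
def dgCompatible (φ : R →ₐ[k] B) (i : ℤ) : Submodule k R :=
  ℛ i ⊓ (ℬ i).comap φ.toLinearMap ⊓
    LinearMap.eqLocus (φ.toLinearMap ∘ₗ dR) (dB ∘ₗ φ.toLinearMap)

theorem mem_dgCompatible {φ : R →ₐ[k] B} {i : ℤ} {x : R} :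
    x ∈ dgCompatible ℛ dR ℬ dB φ i ↔ x ∈ ℛ i ∧ φ x ∈ ℬ i ∧ φ (dR x) = dB (φ x) := by
  simp [dgCompatible, and_assoc]

theorem gradedMonoid_dgCompatible (hR : IsDGAlgebra k R ℛ dR) (hB : IsDGAlgebra k B ℬ dB)
    (φ : R →ₐ[k] B) : SetLike.GradedMonoid (dgCompatible ℛ dR ℬ dB φ) where
  one_mem := by
    refine mem_dgCompatible.2 ⟨hR.graded_monoid.one_mem, ?_, ?_⟩
    · rw [map_one]
      exact hB.graded_monoid.one_mem
    · rw [hR.d_one, map_zero, map_one, hB.d_one]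
  mul_mem := by
    intro i j x y hx hy
    obtain ⟨hxR, hxB, hxd⟩ := mem_dgCompatible.1 hx
    obtain ⟨hyR, hyB, hyd⟩ := mem_dgCompatible.1 hy
    refine mem_dgCompatible.2 ⟨hR.graded_monoid.mul_mem hxR hyR, ?_, ?_⟩
    · rw [map_mul]
      exact hB.graded_monoid.mul_mem hxB hyB
    · rw [hR.d_mul i j x y hxR hyR, map_mul, hB.d_mul i j _ _ hxB hyB, map_add, map_smul,
        map_mul, map_mul, hxd, hyd]

theorem degree_and_d_of_iSup_dgCompatible_eq_top (hR : IsDGAlgebra k R ℛ dR) {φ : R →ₐ[k] B}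
    (htop : ⨆ i, dgCompatible ℛ dR ℬ dB φ i = ⊤) :
    (∀ (i : ℤ) (x : R), x ∈ ℛ i → φ x ∈ ℬ i) ∧ ∀ x : R, φ (dR x) = dB (φ x) := by
  have hx : ∀ x : R, x ∈ ⨆ i, dgCompatible ℛ dR ℬ dB φ i := fun x => htop ▸ Submodule.mem_top
  let _ : Decomposition ℛ := hR.decomp.some
  refine ⟨fun i x hxi => ?_, fun x => ?_⟩
  · have hS : ∀ j, dgCompatible ℛ dR ℬ dB φ j ≤ ℛ j := fun j => inf_le_left.trans inf_le_left
    exact (mem_dgCompatible.1 (Decomposition.mem_of_mem_iSup ℛ hS (hx x) hxi)).2.1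
  · have hS : ⨆ i, dgCompatible ℛ dR ℬ dB φ i ≤
        LinearMap.eqLocus (φ.toLinearMap ∘ₗ dR) (dB ∘ₗ φ.toLinearMap) :=
      iSup_le fun i => inf_le_right
    exact hS (hx x)

end DGAlgebra

section UEA

variable {k : Type} [Field k] {A : Type} [Ring A] [Algebra k A]
  {𝒜 : ℤ → Submodule k A} {br : A →ₗ[k] A →ₗ[k] A} {p : ℤ}

theorem UEA.mkAlgHom_ι (v : A × A) :
    RingQuot.mkAlgHom k (UERel k A 𝒜 br p) (TensorAlgebra.ι k v) =
      ueM k A 𝒜 br p v.1 + ueH k A 𝒜 br p v.2 := by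
  simp [ueM, ueH, ← map_add]

theorem UEA.mem_subalgebra {T : Subalgebra k (UEA k A 𝒜 br p)}
    (hM : ∀ a, ueM k A 𝒜 br p a ∈ T) (hH : ∀ a, ueH k A 𝒜 br p a ∈ T)
    (x : UEA k A 𝒜 br p) : x ∈ T := by
  obtain ⟨t, rfl⟩ := RingQuot.mkAlgHom_surjective k (UERel k A 𝒜 br p) x
  induction t using TensorAlgebra.induction with
  | algebraMap r => rw [AlgHom.commutes]; exact T.algebraMap_mem r
  | ι v => rw [UEA.mkAlgHom_ι]; exact T.add_mem (hM v.1) (hH v.2)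
  | mul s t hs ht => rw [map_mul]; exact T.mul_mem hs ht
  | add s t hs ht => rw [map_add]; exact T.add_mem hs ht

theorem UEA.algHom_ext {B : Type} [Ring B] [Algebra k B] {φ ψ : UEA k A 𝒜 br p →ₐ[k] B}
    (hM : ∀ a, φ (ueM k A 𝒜 br p a) = ψ (ueM k A 𝒜 br p a))
    (hH : ∀ a, φ (ueH k A 𝒜 br p a) = ψ (ueH k A 𝒜 br p a)) : φ = ψ :=
  AlgHom.ext (UEA.mem_subalgebra (T := AlgHom.equalizer φ ψ) hM hH)

theorem UEA.iSup_eq_top [Decomposition 𝒜] (S : ℤ → Submodule k (UEA k A 𝒜 br p))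
    [SetLike.GradedMonoid S] (hM : ∀ i, ∀ a ∈ 𝒜 i, ueM k A 𝒜 br p a ∈ S i)
    (hH : ∀ i, ∀ a ∈ 𝒜 i, ueH k A 𝒜 br p a ∈ S (i + p)) : ⨆ i, S i = ⊤ := by
  rw [Submodule.iSup_eq_toSubmodule_range, eq_top_iff]
  intro x _
  refine UEA.mem_subalgebra (fun a => ?_) (fun a => ?_) x <;>
    rw [← Subalgebra.mem_toSubmodule, ← Submodule.iSup_eq_toSubmodule_range]
  exacts [Decomposition.map_mem_iSup 𝒜 _ id hM a,
    Decomposition.map_mem_iSup 𝒜 _ (· + p) hH a]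

variable {dA : A →ₗ[k] A} {B : Type} [Ring B] [Algebra k B]
  {ℬ : ℤ → Submodule k B} {dB : B →ₗ[k] B} {f g : A →ₗ[k] B}

theorem IsPTriple.tensorLift_eq_of_UERel (hfg : IsPTriple k A B 𝒜 dA br p ℬ dB f g)
    {x y : TensorAlgebra k (A × A)} (h : UERel k A 𝒜 br p x y) :
    TensorAlgebra.lift k (f.coprod g) x = TensorAlgebra.lift k (f.coprod g) y := by
  induction h with
  | mul_M i j a b ha hb => simp [hfg.f_mul]
  | br_H i j a b ha hb => simp [hfg.g_br i j a b ha hb]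
  | mul_H i j a b ha hb => simp [hfg.g_mul i j a b ha hb]
  | br_M i j a b ha hb => simp [hfg.f_br i j a b ha hb]
  | one_M => simp [hfg.f_one]

def IsPTriple.ueLift (hfg : IsPTriple k A B 𝒜 dA br p ℬ dB f g) : UEA k A 𝒜 br p →ₐ[k] B :=
  RingQuot.liftAlgHom k ⟨TensorAlgebra.lift k (f.coprod g), fun _ _ h => hfg.tensorLift_eq_of_UERel h⟩

theorem IsPTriple.ueLift_ueM (hfg : IsPTriple k A B 𝒜 dA br p ℬ dB f g) (a : A) :
    hfg.ueLift (ueM k A 𝒜 br p a) = f a := by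
  simp [IsPTriple.ueLift, ueM]

theorem IsPTriple.ueLift_ueH (hfg : IsPTriple k A B 𝒜 dA br p ℬ dB f g) (a : A) :
    hfg.ueLift (ueH k A 𝒜 br p a) = g a := by
  simp [IsPTriple.ueLift, ueH]

variable {ℬue : ℤ → Submodule k (UEA k A 𝒜 br p)} {Due : UEA k A 𝒜 br p →ₗ[k] UEA k A 𝒜 br p}

theorem IsPTriple.ueM_mem_dgCompatible (hfg : IsPTriple k A B 𝒜 dA br p ℬ dB f g)
    (hue : IsUEADG k A 𝒜 dA br p ℬue Due) {i : ℤ} {a : A} (ha : a ∈ 𝒜 i) :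
    ueM k A 𝒜 br p a ∈ dgCompatible ℬue Due ℬ dB hfg.ueLift i := by
  refine mem_dgCompatible.2 ⟨hue.m_mem i a ha, ?_, ?_⟩
  · rw [hfg.ueLift_ueM]
    exact hfg.f_mem i a ha
  · rw [hue.d_m, hfg.ueLift_ueM, hfg.ueLift_ueM, hfg.f_d]

theorem IsPTriple.ueH_mem_dgCompatible (hfg : IsPTriple k A B 𝒜 dA br p ℬ dB f g)
    (hue : IsUEADG k A 𝒜 dA br p ℬue Due) {i : ℤ} {a : A} (ha : a ∈ 𝒜 i) :
    ueH k A 𝒜 br p a ∈ dgCompatible ℬue Due ℬ dB hfg.ueLift (i + p) := by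
  refine mem_dgCompatible.2 ⟨hue.h_mem i a ha, ?_, ?_⟩
  · rw [hfg.ueLift_ueH]
    exact hfg.g_mem i a ha
  · rw [hue.d_h, hfg.ueLift_ueH, hfg.ueLift_ueH, hfg.g_d]

end UEA

theorem ue_universal_property_general
    (k : Type) [Field k] (A : Type) [Ring A] [Algebra k A]
    (𝒜 : ℤ → Submodule k A) [GradedAlgebra 𝒜] (dA : A →ₗ[k] A)
    (br : A →ₗ[k] A →ₗ[k] A) (p : ℤ)
    -- the canonical DG-algebra structure on `A^{ue}`
    (ℬue : ℤ → Submodule k (UEA k A 𝒜 br p))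
    (Due : UEA k A 𝒜 br p →ₗ[k] UEA k A 𝒜 br p)
    (hue : IsUEADG k A 𝒜 dA br p ℬue Due)
    -- a triple `(B, f, g)` with property `𝒫`
    (B : Type) [Ring B] [Algebra k B]
    (ℬ : ℤ → Submodule k B) (dB : B →ₗ[k] B)
    (hB : IsDGAlgebra k B ℬ dB)
    (f g : A →ₗ[k] B)
    (hfg : IsPTriple k A B 𝒜 dA br p ℬ dB f g) :
    ∃! φ : UEA k A 𝒜 br p →ₐ[k] B,
      (∀ (i : ℤ) (x : UEA k A 𝒜 br p), x ∈ ℬue i → φ x ∈ ℬ i) ∧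
      (∀ x : UEA k A 𝒜 br p, φ (Due x) = dB (φ x)) ∧
      (∀ a : A, φ (ueM k A 𝒜 br p a) = f a) ∧
      (∀ a : A, φ (ueH k A 𝒜 br p a) = g a) := by
  have := gradedMonoid_dgCompatible hue.dga hB hfg.ueLift
  have htop : ⨆ i, dgCompatible ℬue Due ℬ dB hfg.ueLift i = ⊤ :=
    UEA.iSup_eq_top _ (fun _ _ ha => hfg.ueM_mem_dgCompatible hue ha)
      (fun _ _ ha => hfg.ueH_mem_dgCompatible hue ha)
  obtain ⟨hdeg, hd⟩ := degree_and_d_of_iSup_dgCompatible_eq_top hue.dga htop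
  refine ⟨hfg.ueLift, ⟨hdeg, hd, hfg.ueLift_ueM, hfg.ueLift_ueH⟩, ?_⟩
  rintro ψ ⟨-, -, hψM, hψH⟩
  exact UEA.algHom_ext (fun a => (hψM a).trans (hfg.ueLift_ueM a).symm)
    (fun a => (hψH a).trans (hfg.ueLift_ueH a).symm)

/-- **universal property of `A^{ue}`.**  For any triple `(B, f, g)` with
property `𝒫` with respect to the DG Poisson algebra `A`, there is a unique DG-algebra map
`φ : A^{ue} → B` of degree 0 with `f = φ ∘ M` and `g = φ ∘ H`. -/
theorem ue_universal_property
    (k : Type) [Field k] (A : Type) [Ring A] [Algebra k A]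
    (𝒜 : ℤ → Submodule k A) [GradedAlgebra 𝒜] (dA : A →ₗ[k] A)
    (br : A →ₗ[k] A →ₗ[k] A) (p : ℤ)
    (hA : IsDGPoissonAlgebra k A 𝒜 dA br p)
    -- the canonical DG-algebra structure on `A^{ue}`
    (ℬue : ℤ → Submodule k (UEA k A 𝒜 br p))
    (Due : UEA k A 𝒜 br p →ₗ[k] UEA k A 𝒜 br p)
    (hue : IsUEADG k A 𝒜 dA br p ℬue Due)
    -- a triple `(B, f, g)` with property `𝒫`
    (B : Type) [Ring B] [Algebra k B]
    (ℬ : ℤ → Submodule k B) (dB : B →ₗ[k] B)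
    (hB : IsDGAlgebra k B ℬ dB)
    (f g : A →ₗ[k] B)
    (hfg : IsPTriple k A B 𝒜 dA br p ℬ dB f g) :
    ∃! φ : UEA k A 𝒜 br p →ₐ[k] B,
      (∀ (i : ℤ) (x : UEA k A 𝒜 br p), x ∈ ℬue i → φ x ∈ ℬ i) ∧
      (∀ x : UEA k A 𝒜 br p, φ (Due x) = dB (φ x)) ∧
      (∀ a : A, φ (ueM k A 𝒜 br p a) = f a) ∧
      (∀ a : A, φ (ueH k A 𝒜 br p a) = g a) :=
  ue_universal_property_general k A 𝒜 dA br p ℬue Due hue B ℬ dB hB f g hfg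

end
end

section
/- Let A and B be DG Poisson algebras over a field k with Poisson brackets of the same degree p, and let (D, f, g) be a triple with property P with respect to the tensor product DG Poisson algebra A ⊗ B. Let f_A(a) = f(a⊗1), g_A(a) = g(a⊗1) for a ∈ A, and f_B(b) = f(1⊗b), g_B(b) = g(1⊗b) for b ∈ B, so that (D, f_A, g_A) has property P with respect to A and (D, f_B, g_B) has property P with respect to B, and let φ_A : A^{ue} → D and φ_B : B^{ue} → D be the unique DG-algebra maps with f_A = φ_A M, g_A = φ_A H and f_B = φ_B M, g_B = φ_B H given by the universal property. Then for all homogeneous x ∈ A^{ue} and y ∈ B^{ue}, φ_A(x)φ_B(y) = (−1)^{|x||y|} φ_B(y)φ_A(x). -/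
open scoped TensorProduct

noncomputable section

/-- `W`, together with the bilinear map `μ : M → N → W` (thought of as `m ⊗ n`), realizes the
tensor product of the graded vector spaces `M` and `N`: `μ` induces a linear bijection
`M ⊗[k] N ≃ W`, homogeneous tensors are homogeneous of the expected total degree, and every
homogeneous element of `W` is a sum of homogeneous tensors of that total degree. -/
structure RealizesGradedTensor (k : Type) [Field k]
    (M : Type) [AddCommGroup M] [Module k M]
    (N : Type) [AddCommGroup N] [Module k N]
    (W : Type) [AddCommGroup W] [Module k W]
    (𝒱M : ℤ → Submodule k M) (𝒱N : ℤ → Submodule k N) (𝒲 : ℤ → Submodule k W)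
    (μ : M →ₗ[k] N →ₗ[k] W) : Prop where
  bij : Function.Bijective (TensorProduct.lift μ)
  mem : ∀ (i j : ℤ) (m : M) (n : N), m ∈ 𝒱M i → n ∈ 𝒱N j → μ m n ∈ 𝒲 (i + j)
  span : ∀ nn : ℤ, (𝒲 nn : Set W) ⊆
    (Submodule.span k {w : W | ∃ (i j : ℤ) (m : M) (n : N),
      i + j = nn ∧ m ∈ 𝒱M i ∧ n ∈ 𝒱N j ∧ μ m n = w} : Submodule k W)

/-- `C`, together with the bilinear map `μ : A → B → C` (thought of as `a ⊗ b`), realizes the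
graded tensor product of the graded algebras `A` and `B`, with the Koszul-sign multiplication
`(a₁ ⊗ b₁)(a₂ ⊗ b₂) = (-1)^{|a₂||b₁|} (a₁a₂) ⊗ (b₁b₂)` and unit `1 ⊗ 1`. -/
structure RealizesGradedTensorAlg (k : Type) [Field k]
    (A : Type) [Ring A] [Algebra k A] (B : Type) [Ring B] [Algebra k B]
    (C : Type) [Ring C] [Algebra k C]
    (𝒜 : ℤ → Submodule k A) (ℬ : ℤ → Submodule k B) (𝒞 : ℤ → Submodule k C)
    (μ : A →ₗ[k] B →ₗ[k] C) : Prop where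
  toRealizesGradedTensor : RealizesGradedTensor k A B C 𝒜 ℬ 𝒞 μ
  one : μ 1 1 = 1
  mul : ∀ (i₁ j₁ i₂ j₂ : ℤ) (a₁ a₂ : A) (b₁ b₂ : B),
    a₁ ∈ 𝒜 i₁ → b₁ ∈ ℬ j₁ → a₂ ∈ 𝒜 i₂ → b₂ ∈ ℬ j₂ →
    μ a₁ b₁ * μ a₂ b₂ = ((-1 : k) ^ (i₂ * j₁)) • μ (a₁ * a₂) (b₁ * b₂)

/-!
Both sides of the identity are multiplicative in `x` and in `y` with additive degrees, and
`A^{ue}`, `B^{ue}` are generated by the homogeneous `M_a`, `H_a`, so it suffices to treat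
generators; `φ_A`, `φ_B` send them to `f (a ⊗ 1)`, `g (a ⊗ 1)` and `f (1 ⊗ b)`, `g (1 ⊗ b)`.
In `A ⊗ B` the elements `a ⊗ 1` and `1 ⊗ b` graded-commute, and their Poisson bracket, in either
order, is `±{a, 1} ⊗ b ± a ⊗ {1, b} = 0`. Multiplicativity of `f`, (P3) and (P2) then give the
four graded commutation relations between generators.
-/

section GradedCommute

variable (k : Type) [Field k] {D : Type} [Ring D] [Algebra k D]

def GradedCommute (x : D) (m : ℤ) (y : D) (n : ℤ) : Prop :=
  x * y = ((-1 : k) ^ (m * n)) • (y * x)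

variable {k}

theorem GradedCommute.symm {x y : D} {m n : ℤ} (h : GradedCommute k x m y n) :
    GradedCommute k y n x m := by
  have hsq : ((-1 : k) ^ (m * n)) * ((-1 : k) ^ (m * n)) = 1 := by
    rw [← mul_zpow]; norm_num
  rw [GradedCommute, h, smul_smul, mul_comm n m, hsq, one_smul]

theorem GradedCommute.one_left (y : D) (n : ℤ) : GradedCommute k (1 : D) 0 y n := by
  simp [GradedCommute]

theorem GradedCommute.mul_left {x y z : D} {m n l : ℤ} (hx : GradedCommute k x m z l)
    (hy : GradedCommute k y n z l) : GradedCommute k (x * y) (m + n) z l := by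
  rw [GradedCommute, add_mul, zpow_add₀ (by norm_num), mul_assoc, hy, mul_smul_comm,
    ← mul_assoc, hx, smul_mul_assoc, smul_smul, mul_assoc, mul_comm ((-1 : k) ^ (n * l))]

variable (k)

def gradedCommutant (P : D → ℤ → Prop) (m : ℤ) : Submodule k D where
  carrier := {x | ∀ y n, P y n → GradedCommute k x m y n}
  add_mem' hx hx' y n hy := by
    rw [GradedCommute, add_mul, mul_add, hx y n hy, hx' y n hy, smul_add]
  zero_mem' y n _ := by simp [GradedCommute]
  smul_mem' c x hx y n hy := by
    rw [GradedCommute, smul_mul_assoc, hx y n hy, smul_comm, mul_smul_comm]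

instance (P : D → ℤ → Prop) : SetLike.GradedMonoid (gradedCommutant k P) where
  one_mem y n _ := GradedCommute.one_left y n
  mul_mem _ _ _ _ hx hy z l hz := (hx z l hz).mul_left (hy z l hz)

end GradedCommute

section GeneratedGradedAlgebra

variable {k : Type} [Field k] {R : Type} [Ring R] [Algebra k R] {ι : Type}

theorem iSup_mul_iSup_le [Add ι] (W : ι → Submodule k R) [SetLike.GradedMul W] :
    (⨆ m, W m) * (⨆ n, W n) ≤ ⨆ n, W n := by
  rw [Submodule.iSup_mul]
  refine iSup_le fun m => ?_
  rw [Submodule.mul_iSup]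
  exact iSup_le fun n => Submodule.mul_le.2 fun x hx y hy =>
    Submodule.mem_iSup_of_mem (m + n) (SetLike.GradedMul.mul_mem hx hy)

theorem mem_of_mem_iSup_of_le [DecidableEq ι] (ℛ : ι → Submodule k R) [DirectSum.Decomposition ℛ]
    (W : ι → Submodule k R) (hW : ∀ n, W n ≤ ℛ n) {x : R} {j : ι} (hxj : x ∈ ℛ j)
    (hx : x ∈ ⨆ n, W n) : x ∈ W j := by
  rw [← DirectSum.decompose_of_mem_same ℛ hxj]
  clear hxj
  induction hx using Submodule.iSup_induction' with
  | mem n y hy =>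
    by_cases h : n = j
    · subst h
      rwa [DirectSum.decompose_of_mem_same ℛ (hW n hy)]
    · rw [DirectSum.decompose_of_mem_ne ℛ (hW n hy) h]
      exact zero_mem _
  | zero => simp
  | add y z _ _ hy hz =>
    rw [DirectSum.decompose_add, DirectSum.add_apply, Submodule.coe_add]
    exact add_mem hy hz

variable {D : Type} [Ring D] [Algebra k D]

theorem AlgHom.mem_of_mem_graded_of_generators (ℛ : ℤ → Submodule k R) [GradedAlgebra ℛ]
    (C : ℤ → Submodule k D) [SetLike.GradedMonoid C] (φ : R →ₐ[k] D) (G : R → ℤ → Prop)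
    (hG : Algebra.adjoin k {x | ∃ n, G x n} = ⊤) (hGℛ : ∀ x n, G x n → x ∈ ℛ n)
    (hGC : ∀ x n, G x n → φ x ∈ C n) {x : R} {j : ℤ} (hx : x ∈ ℛ j) : φ x ∈ C j := by
  -- The span of the graded pieces `W n` is a subalgebra containing the generators, hence
  -- everything; projecting it to degree `j` lands in `W j`.
  let W : ℤ → Submodule k R := fun n => ℛ n ⊓ (C n).comap φ.toLinearMap
  have : SetLike.GradedMonoid W :=
    { one_mem := ⟨SetLike.one_mem_graded ℛ, by simpa using SetLike.one_mem_graded C⟩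
      mul_mem := fun _ _ _ _ hx hy =>
        ⟨SetLike.mul_mem_graded hx.1 hy.1, by
          simpa using SetLike.mul_mem_graded (Submodule.mem_comap.1 hx.2)
            (Submodule.mem_comap.1 hy.2)⟩ }
  let U : Subalgebra k R := (⨆ n, W n).toSubalgebra
    (Submodule.mem_iSup_of_mem 0 (SetLike.one_mem_graded W))
    (fun _ _ hx hy => iSup_mul_iSup_le W (Submodule.mul_mem_mul hx hy))
  have hU : Algebra.adjoin k {x | ∃ n, G x n} ≤ U :=
    Algebra.adjoin_le fun y ⟨n, hy⟩ => Submodule.mem_iSup_of_mem n ⟨hGℛ y n hy, hGC y n hy⟩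
  rw [hG] at hU
  exact (mem_of_mem_iSup_of_le ℛ W (fun _ => inf_le_left) hx (hU Algebra.mem_top)).2

theorem gradedCommute_of_generators {S : Type} [Ring S] [Algebra k S]
    (ℛ : ℤ → Submodule k R) [GradedAlgebra ℛ] (𝒮 : ℤ → Submodule k S) [GradedAlgebra 𝒮]
    (φ : R →ₐ[k] D) (ψ : S →ₐ[k] D) (G : R → ℤ → Prop) (H : S → ℤ → Prop)
    (hG : Algebra.adjoin k {x | ∃ n, G x n} = ⊤) (hGℛ : ∀ x n, G x n → x ∈ ℛ n)
    (hH : Algebra.adjoin k {y | ∃ n, H y n} = ⊤) (hH𝒮 : ∀ y n, H y n → y ∈ 𝒮 n)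
    (hGH : ∀ x m y n, G x m → H y n → GradedCommute k (φ x) m (ψ y) n)
    {x : R} {y : S} {i j : ℤ} (hx : x ∈ ℛ i) (hy : y ∈ 𝒮 j) :
    GradedCommute k (φ x) i (ψ y) j := by
  have hψ : ∀ {y j}, y ∈ 𝒮 j → ψ y ∈ gradedCommutant k (fun e m => ∃ x, G x m ∧ e = φ x) j :=
    fun hy => ψ.mem_of_mem_graded_of_generators 𝒮 _ H hH hH𝒮
      (fun y n hyn => by rintro _ m ⟨x, hxm, rfl⟩; exact (hGH x m y n hxm hyn).symm) hy
  have hφ := φ.mem_of_mem_graded_of_generators ℛ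
    (gradedCommutant k fun e n => ∃ y, y ∈ 𝒮 n ∧ e = ψ y) G hG hGℛ
    (fun x m hxm => by rintro _ n ⟨y, hy, rfl⟩; exact (hψ hy _ _ ⟨x, hxm, rfl⟩).symm) hx
  exact hφ _ _ ⟨y, hy, rfl⟩

end GeneratedGradedAlgebra

section UniversalEnveloping

variable (k : Type) [Field k] (A : Type) [Ring A] [Algebra k A]
  (𝒜 : ℤ → Submodule k A) (br : A →ₗ[k] A →ₗ[k] A) (p : ℤ)

inductive IsUEGenerator : UEA k A 𝒜 br p → ℤ → Prop
  | ueM {i : ℤ} {a : A} : a ∈ 𝒜 i → IsUEGenerator (ueM k A 𝒜 br p a) i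
  | ueH {i : ℤ} {a : A} : a ∈ 𝒜 i → IsUEGenerator (ueH k A 𝒜 br p a) (i + p)

theorem adjoin_isUEGenerator_eq_top [DirectSum.Decomposition 𝒜] :
    Algebra.adjoin k {x | ∃ n, IsUEGenerator k A 𝒜 br p x n} = ⊤ := by
  classical
  set S := Algebra.adjoin k {x | ∃ n, IsUEGenerator k A 𝒜 br p x n}
  have of_homogeneous (F : A →ₗ[k] UEA k A 𝒜 br p) (hF : ∀ i a, a ∈ 𝒜 i → F a ∈ S) (a : A) :
      F a ∈ S := by
    rw [← DirectSum.sum_support_decompose 𝒜 a, map_sum]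
    exact sum_mem fun i _ => hF i _ (SetLike.coe_mem _)
  have hM := of_homogeneous _ fun i _ ha => Algebra.subset_adjoin ⟨i, .ueM ha⟩
  have hH := of_homogeneous _ fun i _ ha => Algebra.subset_adjoin ⟨i + p, .ueH ha⟩
  rw [eq_top_iff, ← (AlgHom.range_eq_top _).2 (RingQuot.mkAlgHom_surjective k _), ← Algebra.map_top,
    ← TensorAlgebra.adjoin_range_ι, AlgHom.map_adjoin, Algebra.adjoin_le_iff]
  rintro _ ⟨_, ⟨⟨a, b⟩, rfl⟩, rfl⟩
  have hsplit : TensorAlgebra.ι k (a, b) =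
      TensorAlgebra.ι k (LinearMap.inl k A A a) + TensorAlgebra.ι k (LinearMap.inr k A A b) := by
    rw [← map_add]; simp
  rw [hsplit, map_add]
  exact add_mem (hM a) (hH b)

variable {k A 𝒜 br p}

theorem IsUEADG.mem_of_isUEGenerator {dA : A →ₗ[k] A} {ℬ : ℤ → Submodule k (UEA k A 𝒜 br p)}
    {D : UEA k A 𝒜 br p →ₗ[k] UEA k A 𝒜 br p} (h : IsUEADG k A 𝒜 dA br p ℬ D) :
    ∀ x n, IsUEGenerator k A 𝒜 br p x n → x ∈ ℬ n := by
  rintro _ _ (⟨ha⟩ | ⟨ha⟩)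
  exacts [h.m_mem _ _ ha, h.h_mem _ _ ha]

end UniversalEnveloping

namespace IsDGPoissonAlgebra

variable {k : Type} [Field k] {A : Type} [Ring A] [Algebra k A] {𝒜 : ℤ → Submodule k A}
  [SetLike.GradedOne 𝒜] {dA : A →ₗ[k] A} {br : A →ₗ[k] A →ₗ[k] A} {p : ℤ}

theorem br_one (h : IsDGPoissonAlgebra k A 𝒜 dA br p) {i : ℤ} {a : A} (ha : a ∈ 𝒜 i) :
    br a 1 = 0 := by
  have h1 := SetLike.one_mem_graded 𝒜
  have hleib := h.poisson i 0 0 a 1 1 ha h1 h1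
  rw [mul_one, mul_one, mul_zero, zpow_zero, one_smul, one_mul] at hleib
  exact left_eq_add.mp hleib

theorem one_br (h : IsDGPoissonAlgebra k A 𝒜 dA br p) {i : ℤ} {a : A} (ha : a ∈ 𝒜 i) :
    br 1 a = 0 := by
  rw [h.antisymm 0 i 1 a (SetLike.one_mem_graded 𝒜) ha, h.br_one ha, smul_zero, neg_zero]

end IsDGPoissonAlgebra

namespace RealizesGradedTensorAlg

variable {k : Type} [Field k] {A : Type} [Ring A] [Algebra k A] {B : Type} [Ring B] [Algebra k B]
  {C : Type} [Ring C] [Algebra k C] {𝒜 : ℤ → Submodule k A} {ℬ : ℤ → Submodule k B}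
  {𝒞 : ℤ → Submodule k C} {μ : A →ₗ[k] B →ₗ[k] C}

theorem tmul_one_mem [SetLike.GradedOne ℬ] (h : RealizesGradedTensorAlg k A B C 𝒜 ℬ 𝒞 μ)
    {i : ℤ} {a : A} (ha : a ∈ 𝒜 i) : μ a 1 ∈ 𝒞 i := by
  simpa using h.toRealizesGradedTensor.mem i 0 a 1 ha (SetLike.one_mem_graded ℬ)

theorem one_tmul_mem [SetLike.GradedOne 𝒜] (h : RealizesGradedTensorAlg k A B C 𝒜 ℬ 𝒞 μ)
    {j : ℤ} {b : B} (hb : b ∈ ℬ j) : μ 1 b ∈ 𝒞 j := by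
  simpa using h.toRealizesGradedTensor.mem 0 j 1 b (SetLike.one_mem_graded 𝒜) hb

theorem gradedCommute_tmul_one_one_tmul [SetLike.GradedOne 𝒜] [SetLike.GradedOne ℬ]
    (h : RealizesGradedTensorAlg k A B C 𝒜 ℬ 𝒞 μ) {i j : ℤ} {a : A} {b : B} (ha : a ∈ 𝒜 i)
    (hb : b ∈ ℬ j) : GradedCommute k (μ a 1) i (μ 1 b) j := by
  have h1A := SetLike.one_mem_graded 𝒜
  have h1B := SetLike.one_mem_graded ℬ
  have hab : μ a 1 * μ 1 b = μ a b := by simpa using h.mul i 0 0 j a 1 1 b ha h1B h1A hb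
  have hba : μ 1 b * μ a 1 = ((-1 : k) ^ (i * j)) • μ a b := by
    simpa using h.mul 0 j i 0 1 a b 1 h1A hb ha h1B
  exact GradedCommute.symm (by rw [GradedCommute, hba, hab, mul_comm j i])

end RealizesGradedTensorAlg

namespace IsPTriple

variable {k : Type} [Field k] {T : Type} [Ring T] [Algebra k T] {D : Type} [Ring D] [Algebra k D]
  {𝒯 : ℤ → Submodule k T} {dT : T →ₗ[k] T} {br : T →ₗ[k] T →ₗ[k] T} {p : ℤ}
  {𝒟 : ℤ → Submodule k D} {dD : D →ₗ[k] D} {f g : T →ₗ[k] D}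
  {u v : T} {i j : ℤ}

theorem gradedCommute_f_f (h : IsPTriple k T D 𝒯 dT br p 𝒟 dD f g)
    (huv : GradedCommute k u i v j) : GradedCommute k (f u) i (f v) j := by
  rw [GradedCommute, ← h.f_mul, ← h.f_mul, huv, map_smul]

theorem gradedCommute_g_f (h : IsPTriple k T D 𝒯 dT br p 𝒟 dD f g)
    (hu : u ∈ 𝒯 i) (hv : v ∈ 𝒯 j) (huv : br u v = 0) :
    GradedCommute k (g u) (i + p) (f v) j := by
  have hf := h.f_br i j u v hu hv
  rw [huv, map_zero] at hf
  exact sub_eq_zero.mp hf.symm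

theorem gradedCommute_g_g (h : IsPTriple k T D 𝒯 dT br p 𝒟 dD f g)
    (hu : u ∈ 𝒯 i) (hv : v ∈ 𝒯 j) (huv : br u v = 0) :
    GradedCommute k (g u) (i + p) (g v) (j + p) := by
  have hg := h.g_br i j u v hu hv
  rw [huv, map_zero] at hg
  exact sub_eq_zero.mp hg.symm

end IsPTriple

theorem phiA_phiB_graded_commute_general
    (k : Type) [Field k]
    (A : Type) [Ring A] [Algebra k A]
    (𝒜 : ℤ → Submodule k A) [GradedAlgebra 𝒜] (dA : A →ₗ[k] A)
    (brA : A →ₗ[k] A →ₗ[k] A)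
    (B : Type) [Ring B] [Algebra k B]
    (ℬ : ℤ → Submodule k B) [GradedAlgebra ℬ] (dB : B →ₗ[k] B)
    (brB : B →ₗ[k] B →ₗ[k] B) (p : ℤ)
    (hA : IsDGPoissonAlgebra k A 𝒜 dA brA p)
    (hB : IsDGPoissonAlgebra k B ℬ dB brB p)
    -- `T` realizes the tensor product DG Poisson algebra `A ⊗ B`
    (T : Type) [Ring T] [Algebra k T]
    (𝒯 : ℤ → Submodule k T) (μT : A →ₗ[k] B →ₗ[k] T)
    (hT : RealizesGradedTensorAlg k A B T 𝒜 ℬ 𝒯 μT)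
    (dT : T →ₗ[k] T)
    (brT : T →ₗ[k] T →ₗ[k] T)
    (hbrT : ∀ (i₁ j₁ i₂ j₂ : ℤ) (a₁ a₂ : A) (b₁ b₂ : B),
      a₁ ∈ 𝒜 i₁ → b₁ ∈ ℬ j₁ → a₂ ∈ 𝒜 i₂ → b₂ ∈ ℬ j₂ →
      brT (μT a₁ b₁) (μT a₂ b₂) =
        ((-1 : k) ^ ((i₂ + p) * j₁)) • μT (brA a₁ a₂) (b₁ * b₂) +
        ((-1 : k) ^ ((j₁ + p) * i₂)) • μT (a₁ * a₂) (brB b₁ b₂))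
    -- a `𝒫`-triple `(D, f, g)` with respect to `A ⊗ B`
    (D : Type) [Ring D] [Algebra k D]
    (𝒟 : ℤ → Submodule k D) (dD : D →ₗ[k] D)
    (f g : T →ₗ[k] D)
    (hfg : IsPTriple k T D 𝒯 dT brT p 𝒟 dD f g)
    -- the canonical DG-algebra structures on `A^{ue}` and `B^{ue}`
    (ℬA : ℤ → Submodule k (UEA k A 𝒜 brA p))
    (DA : UEA k A 𝒜 brA p →ₗ[k] UEA k A 𝒜 brA p)
    (hueA : IsUEADG k A 𝒜 dA brA p ℬA DA)
    (ℬB : ℤ → Submodule k (UEA k B ℬ brB p))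
    (DB : UEA k B ℬ brB p →ₗ[k] UEA k B ℬ brB p)
    (hueB : IsUEADG k B ℬ dB brB p ℬB DB)
    -- the DG-algebra maps `φ_A`, `φ_B` given by the universal property
    (φA : UEA k A 𝒜 brA p →ₐ[k] D)
    (hφA : (∀ a : A, φA (ueM k A 𝒜 brA p a) = f (μT a 1)) ∧
           (∀ a : A, φA (ueH k A 𝒜 brA p a) = g (μT a 1)))
    (φB : UEA k B ℬ brB p →ₐ[k] D)
    (hφB : (∀ b : B, φB (ueM k B ℬ brB p b) = f (μT 1 b)) ∧
           (∀ b : B, φB (ueH k B ℬ brB p b) = g (μT 1 b))) :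
    ∀ (i j : ℤ) (x : UEA k A 𝒜 brA p) (y : UEA k B ℬ brB p),
      x ∈ ℬA i → y ∈ ℬB j →
      φA x * φB y = ((-1 : k) ^ (i * j)) • (φB y * φA x) := by
  have : GradedAlgebra ℬA := { hueA.dga.graded_monoid, hueA.dga.decomp.some with }
  have : GradedAlgebra ℬB := { hueB.dga.graded_monoid, hueB.dga.decomp.some with }
  have h1A := SetLike.one_mem_graded 𝒜
  have h1B := SetLike.one_mem_graded ℬ
  have br_left_right {i j : ℤ} {a : A} {b : B} (ha : a ∈ 𝒜 i) (hb : b ∈ ℬ j) :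
      brT (μT a 1) (μT 1 b) = 0 := by
    simp [hbrT i 0 0 j a 1 1 b ha h1B h1A hb, hA.br_one ha, hB.one_br hb]
  have br_right_left {i j : ℤ} {a : A} {b : B} (ha : a ∈ 𝒜 i) (hb : b ∈ ℬ j) :
      brT (μT 1 b) (μT a 1) = 0 := by
    simp [hbrT 0 j i 0 1 a b 1 h1A hb ha h1B, hA.one_br ha, hB.br_one hb]
  intro i j x y hx hy
  refine gradedCommute_of_generators ℬA ℬB φA φB _ _ (adjoin_isUEGenerator_eq_top k A 𝒜 brA p)
    hueA.mem_of_isUEGenerator (adjoin_isUEGenerator_eq_top k B ℬ brB p)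
    hueB.mem_of_isUEGenerator ?_ hx hy
  rintro _ _ _ _ (⟨ha⟩ | ⟨ha⟩) (⟨hb⟩ | ⟨hb⟩) <;> simp only [hφA.1, hφA.2, hφB.1, hφB.2]
  · exact hfg.gradedCommute_f_f (hT.gradedCommute_tmul_one_one_tmul ha hb)
  · exact (hfg.gradedCommute_g_f (hT.one_tmul_mem hb) (hT.tmul_one_mem ha)
      (br_right_left ha hb)).symm
  · exact hfg.gradedCommute_g_f (hT.tmul_one_mem ha) (hT.one_tmul_mem hb) (br_left_right ha hb)
  · exact hfg.gradedCommute_g_g (hT.tmul_one_mem ha) (hT.one_tmul_mem hb) (br_left_right ha hb)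

/-- Let `A`, `B` be DG Poisson algebras with brackets of the same degree
`p` and `(D, f, g)` a `𝒫`-triple with respect to the tensor product DG Poisson algebra
`A ⊗ B` (realized by `T`).  With `f_A a = f (a ⊗ 1)`, `g_A a = g (a ⊗ 1)`,
`f_B b = f (1 ⊗ b)`, `g_B b = g (1 ⊗ b)`, the triples `(D, f_A, g_A)` and `(D, f_B, g_B)` have
property `𝒫` with respect to `A` and `B`, and for the induced DG-algebra maps
`φ_A : A^{ue} → D`, `φ_B : B^{ue} → D` one has
`φ_A(x) φ_B(y) = (-1)^{|x||y|} φ_B(y) φ_A(x)` for all homogeneous `x ∈ A^{ue}`, `y ∈ B^{ue}`. -/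
theorem phiA_phiB_graded_commute
    (k : Type) [Field k]
    (A : Type) [Ring A] [Algebra k A]
    (𝒜 : ℤ → Submodule k A) [GradedAlgebra 𝒜] (dA : A →ₗ[k] A)
    (brA : A →ₗ[k] A →ₗ[k] A)
    (B : Type) [Ring B] [Algebra k B]
    (ℬ : ℤ → Submodule k B) [GradedAlgebra ℬ] (dB : B →ₗ[k] B)
    (brB : B →ₗ[k] B →ₗ[k] B) (p : ℤ)
    (hA : IsDGPoissonAlgebra k A 𝒜 dA brA p)
    (hB : IsDGPoissonAlgebra k B ℬ dB brB p)
    -- `T` realizes the tensor product DG Poisson algebra `A ⊗ B`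
    (T : Type) [Ring T] [Algebra k T]
    (𝒯 : ℤ → Submodule k T) (μT : A →ₗ[k] B →ₗ[k] T)
    (hT : RealizesGradedTensorAlg k A B T 𝒜 ℬ 𝒯 μT)
    (dT : T →ₗ[k] T)
    (hdT : ∀ (i j : ℤ) (a : A) (b : B), a ∈ 𝒜 i → b ∈ ℬ j →
      dT (μT a b) = μT (dA a) b + ((-1 : k) ^ i) • μT a (dB b))
    (brT : T →ₗ[k] T →ₗ[k] T)
    (hbrT : ∀ (i₁ j₁ i₂ j₂ : ℤ) (a₁ a₂ : A) (b₁ b₂ : B),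
      a₁ ∈ 𝒜 i₁ → b₁ ∈ ℬ j₁ → a₂ ∈ 𝒜 i₂ → b₂ ∈ ℬ j₂ →
      brT (μT a₁ b₁) (μT a₂ b₂) =
        ((-1 : k) ^ ((i₂ + p) * j₁)) • μT (brA a₁ a₂) (b₁ * b₂) +
        ((-1 : k) ^ ((j₁ + p) * i₂)) • μT (a₁ * a₂) (brB b₁ b₂))
    -- a `𝒫`-triple `(D, f, g)` with respect to `A ⊗ B`
    (D : Type) [Ring D] [Algebra k D]
    (𝒟 : ℤ → Submodule k D) (dD : D →ₗ[k] D)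
    (hD : IsDGAlgebra k D 𝒟 dD)
    (f g : T →ₗ[k] D)
    (hfg : IsPTriple k T D 𝒯 dT brT p 𝒟 dD f g)
    -- the restricted triples along `a ↦ a ⊗ 1` and `b ↦ 1 ⊗ b` have property `𝒫`
    (hPA : IsPTriple k A D 𝒜 dA brA p 𝒟 dD
      (f.comp (μT.flip 1)) (g.comp (μT.flip 1)))
    (hPB : IsPTriple k B D ℬ dB brB p 𝒟 dD
      (f.comp (μT 1)) (g.comp (μT 1)))
    -- the canonical DG-algebra structures on `A^{ue}` and `B^{ue}`
    (ℬA : ℤ → Submodule k (UEA k A 𝒜 brA p))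
    (DA : UEA k A 𝒜 brA p →ₗ[k] UEA k A 𝒜 brA p)
    (hueA : IsUEADG k A 𝒜 dA brA p ℬA DA)
    (ℬB : ℤ → Submodule k (UEA k B ℬ brB p))
    (DB : UEA k B ℬ brB p →ₗ[k] UEA k B ℬ brB p)
    (hueB : IsUEADG k B ℬ dB brB p ℬB DB)
    -- the DG-algebra maps `φ_A`, `φ_B` given by the universal property
    (φA : UEA k A 𝒜 brA p →ₐ[k] D)
    (hφA : (∀ a : A, φA (ueM k A 𝒜 brA p a) = f (μT a 1)) ∧
           (∀ a : A, φA (ueH k A 𝒜 brA p a) = g (μT a 1)))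
    (φB : UEA k B ℬ brB p →ₐ[k] D)
    (hφB : (∀ b : B, φB (ueM k B ℬ brB p b) = f (μT 1 b)) ∧
           (∀ b : B, φB (ueH k B ℬ brB p b) = g (μT 1 b))) :
    ∀ (i j : ℤ) (x : UEA k A 𝒜 brA p) (y : UEA k B ℬ brB p),
      x ∈ ℬA i → y ∈ ℬB j →
      φA x * φB y = ((-1 : k) ^ (i * j)) • (φB y * φA x) :=
  phiA_phiB_graded_commute_general k A 𝒜 dA brA B ℬ dB brB p hA hB T 𝒯 μT hT dT brT hbrT D 𝒟 dD f g
    hfg ℬA DA hueA ℬB DB hueB φA hφA φB hφB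

end
end
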